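/- arXiv:2505.24460 — 2 statements merged into one kernel-verified Lean document; each statement's English description precedes it below -/
import Mathlib

section
/- Fix k > 0, ρ ∈ (0,1), and constants c₁ > 0 and c₂ > 0. Then there exists a unique pair (t*, p*) ∈ ℝ × ℝ satisfying the activation condition g_{k,ρ}(ρ·t* − p*) = c₁ and the free-entry condition ℋ(p*, t*) = 0; moreover, t* is the unique global maximizer of the function t ↦ ℋ(p*, t). -/
open MeasureTheory Real Set

/-- Standard normal density. -/
noncomputable def stdPhi (x : ℝ) : ℝ := (Real.sqrt (2 * Real.pi))⁻¹ * Real.exp (-x ^ 2 / 2)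

/-- Standard normal CDF. -/
noncomputable def stdPhiCDF (x : ℝ) : ℝ := ∫ u in Set.Iic x, stdPhi u

/-- Normalized expected-profit function `g_{k,ρ}`. -/
noncomputable def gkr (k ρ x : ℝ) : ℝ :=
  Real.exp (k * x + k ^ 2 * (1 - ρ ^ 2) / 2) *
      stdPhiCDF ((x + k * (1 - ρ ^ 2)) / Real.sqrt (1 - ρ ^ 2)) -
    stdPhiCDF (x / Real.sqrt (1 - ρ ^ 2))

/-- Free-entry residual `ℋ(p, t)`. -/
noncomputable def FEres (k ρ c₁ c₂ p t : ℝ) : ℝ :=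
  (∫ s in Set.Ici t, gkr k ρ (ρ * s - p) * stdPhi s) - c₁ * stdPhiCDF (-t) - c₂

/-!
`g_{k,ρ}` has derivative `k e^{kx + k²(1-ρ²)/2} Φ((x + k(1-ρ²))/√(1-ρ²)) > 0` (the two density
terms cancel), and increases from `0` to `∞`; so the activation condition says exactly
`p = ρt - x₁` for the unique `x₁` with `g(x₁) = c₁`. Since `∂ℋ/∂t (p, t) = (c₁ - g(ρt - p)) φ(t)`,
for fixed `p` the map `t ↦ ℋ(p, t)` increases up to the activation threshold and decreases after
it, which gives the strict global maximum. Along the activation locus, `h(t) = ℋ(ρt - x₁, t)` is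
then strictly decreasing (moving `t` to the right lowers `ℋ` at fixed `p`, and the accompanying
rise of `p` lowers it further), continuous, tends to `+∞` at `-∞` and to `-c₂ < 0` at `+∞`; its
unique zero is `t*`.
-/

open Filter Topology ProbabilityTheory

theorem continuousAt_setIntegral_Ici_of_dominated {F : ℝ → ℝ → ℝ} {bound : ℝ → ℝ} {t₀ : ℝ}
    (hF_meas : ∀ t, AEStronglyMeasurable (F t))
    (h_bound : ∀ᶠ t in 𝓝 t₀, ∀ s, ‖F t s‖ ≤ bound s) (bound_integrable : Integrable bound)
    (h_cont : ∀ s, ContinuousAt (fun t => F t s) t₀) :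
    ContinuousAt (fun t => ∫ s in Ici t, F t s) t₀ := by
  simp_rw [← integral_indicator measurableSet_Ici]
  refine continuousAt_of_dominated (bound := bound)
    (.of_forall fun t => (hF_meas t).indicator measurableSet_Ici)
    (h_bound.mono fun t ht => .of_forall fun s => (norm_indicator_le_norm_self _ s).trans (ht s))
    bound_integrable ?_
  filter_upwards [Measure.ae_ne volume t₀] with s hs
  rcases hs.lt_or_gt with hlt | hgt
  · refine continuousAt_const.congr (f := fun _ => (0 : ℝ)) ?_
    filter_upwards [Ioi_mem_nhds hlt] with t ht
    exact (indicator_of_notMem (notMem_Ici.2 ht) _).symm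
  · refine (h_cont s).congr ?_
    filter_upwards [Iio_mem_nhds hgt] with t ht
    exact (indicator_of_mem (mem_Ici.2 (le_of_lt ht)) _).symm

lemma stdPhi_eq_gaussianPDFReal : stdPhi = gaussianPDFReal 0 1 := by
  ext x
  simp [stdPhi, gaussianPDFReal]

lemma stdPhi_pos (x : ℝ) : 0 < stdPhi x := by
  unfold stdPhi
  positivity

lemma stdPhi_neg (x : ℝ) : stdPhi (-x) = stdPhi x := by
  simp [stdPhi]

@[fun_prop]
lemma continuous_stdPhi : Continuous stdPhi := by
  unfold stdPhi
  fun_prop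

lemma integrable_stdPhi : Integrable stdPhi :=
  stdPhi_eq_gaussianPDFReal ▸ integrable_gaussianPDFReal 0 1

lemma integral_stdPhi : ∫ x, stdPhi x = 1 :=
  stdPhi_eq_gaussianPDFReal ▸ integral_gaussianPDFReal_eq_one 0 one_ne_zero

lemma integrable_exp_mul_add_mul_stdPhi (a b : ℝ) :
    Integrable fun s => exp (a * s + b) * stdPhi s := by
  have h := ((integrable_exp_neg_mul_sq (b := 1 / 2) (by norm_num)).comp_sub_right a).const_mul
    ((√(2 * π))⁻¹ * exp (a ^ 2 / 2 + b))
  refine h.congr (ae_of_all _ fun s => ?_)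
  simp only [stdPhi]
  rw [mul_left_comm, mul_assoc, ← exp_add, ← exp_add]
  ring_nf

lemma stdPhiCDF_nonneg (x : ℝ) : 0 ≤ stdPhiCDF x :=
  setIntegral_nonneg measurableSet_Iic fun u _ => (stdPhi_pos u).le

lemma stdPhiCDF_le_one (x : ℝ) : stdPhiCDF x ≤ 1 :=
  integral_stdPhi ▸ setIntegral_le_integral integrable_stdPhi
    (ae_of_all _ fun u => (stdPhi_pos u).le)

lemma hasDerivAt_stdPhiCDF (x : ℝ) : HasDerivAt stdPhiCDF (stdPhi x) x := by
  have h : stdPhiCDF = fun y => stdPhiCDF 0 + ∫ u in (0 : ℝ)..y, stdPhi u := by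
    ext y
    rw [← intervalIntegral.integral_Iic_sub_Iic integrable_stdPhi.integrableOn
      integrable_stdPhi.integrableOn, stdPhiCDF, stdPhiCDF, add_sub_cancel]
  rw [h]
  exact ((continuous_stdPhi.integral_hasStrictDerivAt 0 x).hasDerivAt).const_add _

@[fun_prop]
lemma continuous_stdPhiCDF : Continuous stdPhiCDF :=
  continuous_iff_continuousAt.2 fun x => (hasDerivAt_stdPhiCDF x).continuousAt

lemma strictMono_stdPhiCDF : StrictMono stdPhiCDF :=
  strictMono_of_hasDerivAt_pos hasDerivAt_stdPhiCDF stdPhi_pos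

lemma stdPhiCDF_pos (x : ℝ) : 0 < stdPhiCDF x :=
  (stdPhiCDF_nonneg (x - 1)).trans_lt (strictMono_stdPhiCDF (sub_one_lt x))

lemma tendsto_stdPhiCDF_atBot : Tendsto stdPhiCDF atBot (𝓝 0) :=
  tendsto_integral_Iic_zero tendsto_id

lemma stdPhiCDF_neg (t : ℝ) : stdPhiCDF (-t) = ∫ s in Ici t, stdPhi s := by
  rw [integral_Ici_eq_integral_Ioi, ← neg_neg t, ← integral_comp_neg_Iic, neg_neg]
  simp only [stdPhi_neg]
  rfl

lemma exp_mul_stdPhi_shift {v : ℝ} (hv : 0 < v) (k x : ℝ) :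
    exp (k * x + k ^ 2 * v / 2) * stdPhi ((x + k * v) / √v) = stdPhi (x / √v) := by
  have hsq : √v ^ 2 = v := sq_sqrt hv.le
  have hne : √v ≠ 0 := (sqrt_pos.2 hv).ne'
  simp only [stdPhi]
  rw [mul_left_comm, ← exp_add]
  congr 2
  field_simp
  rw [hsq]
  ring

section gkr

variable {k ρ : ℝ}

@[fun_prop]
lemma continuous_gkr : Continuous (gkr k ρ) := by
  unfold gkr
  fun_prop

lemma gkr_le_exp (x : ℝ) : gkr k ρ x ≤ exp (k * x + k ^ 2 * (1 - ρ ^ 2) / 2) := by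
  have := stdPhiCDF_le_one ((x + k * (1 - ρ ^ 2)) / √(1 - ρ ^ 2))
  have := stdPhiCDF_nonneg (x / √(1 - ρ ^ 2))
  unfold gkr
  nlinarith [exp_pos (k * x + k ^ 2 * (1 - ρ ^ 2) / 2)]

lemma neg_one_le_gkr (x : ℝ) : -1 ≤ gkr k ρ x := by
  have := stdPhiCDF_le_one (x / √(1 - ρ ^ 2))
  have := mul_nonneg (exp_pos (k * x + k ^ 2 * (1 - ρ ^ 2) / 2)).le
    (stdPhiCDF_nonneg ((x + k * (1 - ρ ^ 2)) / √(1 - ρ ^ 2)))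
  unfold gkr
  linarith

variable (hρ : ρ ^ 2 < 1)
include hρ

lemma hasDerivAt_gkr (x : ℝ) :
    HasDerivAt (gkr k ρ)
      (k * exp (k * x + k ^ 2 * (1 - ρ ^ 2) / 2) *
        stdPhiCDF ((x + k * (1 - ρ ^ 2)) / √(1 - ρ ^ 2))) x := by
  have hv : 0 < 1 - ρ ^ 2 := by linarith
  set σ := √(1 - ρ ^ 2)
  have hexp : HasDerivAt (fun y => exp (k * y + k ^ 2 * (1 - ρ ^ 2) / 2))
      (exp (k * x + k ^ 2 * (1 - ρ ^ 2) / 2) * k) x :=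
    (((hasDerivAt_id x).const_mul k).add_const _).exp.congr_deriv (by simp)
  have hΦ₁ : HasDerivAt (fun y => stdPhiCDF ((y + k * (1 - ρ ^ 2)) / σ))
      (stdPhi ((x + k * (1 - ρ ^ 2)) / σ) * (1 / σ)) x :=
    (hasDerivAt_stdPhiCDF _).comp x (((hasDerivAt_id x).add_const _).div_const σ)
  have hΦ₂ : HasDerivAt (fun y => stdPhiCDF (y / σ)) (stdPhi (x / σ) * (1 / σ)) x :=
    (hasDerivAt_stdPhiCDF _).comp x ((hasDerivAt_id x).div_const σ)
  refine ((hexp.mul hΦ₁).sub hΦ₂).congr_deriv ?_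
  rw [← exp_mul_stdPhi_shift hv k x]
  ring

variable (hk : 0 < k)
include hk

lemma strictMono_gkr : StrictMono (gkr k ρ) :=
  strictMono_of_hasDerivAt_pos (hasDerivAt_gkr hρ) fun _ =>
    mul_pos (mul_pos hk (exp_pos _)) (stdPhiCDF_pos _)

lemma tendsto_gkr_atBot : Tendsto (gkr k ρ) atBot (𝓝 0) := by
  have hσ : 0 < √(1 - ρ ^ 2) := sqrt_pos.2 (by linarith)
  have hexp : Tendsto (fun x => exp (k * x + k ^ 2 * (1 - ρ ^ 2) / 2)) atBot (𝓝 0) :=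
    tendsto_exp_atBot.comp <| tendsto_atBot_add_const_right _ _ <|
      (tendsto_const_mul_atBot_of_pos hk).2 tendsto_id
  have hfirst : Tendsto (fun x => exp (k * x + k ^ 2 * (1 - ρ ^ 2) / 2) *
      stdPhiCDF ((x + k * (1 - ρ ^ 2)) / √(1 - ρ ^ 2))) atBot (𝓝 0) :=
    squeeze_zero (fun _ => mul_nonneg (exp_pos _).le (stdPhiCDF_nonneg _))
      (fun x => mul_le_of_le_one_right (exp_pos _).le (stdPhiCDF_le_one _)) hexp
  have h := hfirst.sub (tendsto_stdPhiCDF_atBot.comp (tendsto_id.atBot_div_const hσ))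
  rwa [sub_zero] at h

lemma gkr_pos (x : ℝ) : 0 < gkr k ρ x :=
  ((strictMono_gkr hρ hk).monotone.le_of_tendsto (tendsto_gkr_atBot hρ hk) (x - 1)).trans_lt
    (strictMono_gkr hρ hk (sub_one_lt x))

lemma tendsto_gkr_atTop : Tendsto (gkr k ρ) atTop atTop := by
  have hlower : ∀ x, 0 ≤ x → exp (k * x) * stdPhiCDF 0 - 1 ≤ gkr k ρ x := by
    intro x hx
    have hv : 0 ≤ 1 - ρ ^ 2 := by linarith
    have hΦ : stdPhiCDF 0 ≤ stdPhiCDF ((x + k * (1 - ρ ^ 2)) / √(1 - ρ ^ 2)) :=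
      strictMono_stdPhiCDF.monotone (by positivity)
    have hexp : exp (k * x) ≤ exp (k * x + k ^ 2 * (1 - ρ ^ 2) / 2) :=
      exp_le_exp.2 (by nlinarith)
    unfold gkr
    nlinarith [stdPhiCDF_le_one (x / √(1 - ρ ^ 2)), stdPhiCDF_pos 0, exp_pos (k * x)]
  refine tendsto_atTop_mono' _ ((eventually_ge_atTop 0).mono hlower) ?_
  exact tendsto_atTop_add_const_right _ _ <| (tendsto_exp_atTop.comp <|
    (tendsto_const_mul_atTop_of_pos hk).2 tendsto_id).atTop_mul_const (stdPhiCDF_pos 0)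

lemma exists_gkr_eq {c : ℝ} (hc : 0 < c) : ∃ x, gkr k ρ x = c := by
  obtain ⟨a, ha⟩ := ((tendsto_gkr_atBot hρ hk).eventually_lt_const hc).exists
  obtain ⟨b, hb⟩ := ((tendsto_gkr_atTop hρ hk).eventually_ge_atTop c).exists
  exact mem_range_of_exists_le_of_exists_ge continuous_gkr ⟨a, ha.le⟩ ⟨b, hb⟩

end gkr

lemma integrable_gkr_mul_stdPhi (k ρ p : ℝ) :
    Integrable fun s => gkr k ρ (ρ * s - p) * stdPhi s := by
  refine ((integrable_exp_mul_add_mul_stdPhi (k * ρ) (k ^ 2 * (1 - ρ ^ 2) / 2 - k * p)).add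
    integrable_stdPhi).mono' (by fun_prop) (ae_of_all _ fun s => ?_)
  have hexp : exp (k * (ρ * s - p) + k ^ 2 * (1 - ρ ^ 2) / 2) =
      exp (k * ρ * s + (k ^ 2 * (1 - ρ ^ 2) / 2 - k * p)) := by ring_nf
  have hg : |gkr k ρ (ρ * s - p)| ≤ exp (k * ρ * s + (k ^ 2 * (1 - ρ ^ 2) / 2 - k * p)) + 1 := by
    have := neg_one_le_gkr (k := k) (ρ := ρ) (ρ * s - p)
    have := gkr_le_exp (k := k) (ρ := ρ) (ρ * s - p)
    rw [abs_le, ← hexp]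
    constructor <;> linarith [exp_pos (k * (ρ * s - p) + k ^ 2 * (1 - ρ ^ 2) / 2)]
  rw [Pi.add_apply, norm_mul, norm_of_nonneg (stdPhi_pos s).le, norm_eq_abs]
  nlinarith [stdPhi_pos s]

section FEres

variable {k ρ c₁ c₂ : ℝ}

lemma FEres_sub_FEres (p t t' : ℝ) :
    FEres k ρ c₁ c₂ p t - FEres k ρ c₁ c₂ p t' =
      ∫ s in t..t', gkr k ρ (ρ * s - p) * stdPhi s - c₁ * stdPhi s := by
  have hg := integrable_gkr_mul_stdPhi k ρ p
  rw [FEres, FEres, stdPhiCDF_neg, stdPhiCDF_neg, intervalIntegral.integral_sub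
    hg.intervalIntegrable (integrable_stdPhi.const_mul c₁).intervalIntegrable,
    intervalIntegral.integral_const_mul,
    ← intervalIntegral.integral_Ici_sub_Ici' hg.integrableOn hg.integrableOn,
    ← intervalIntegral.integral_Ici_sub_Ici' integrable_stdPhi.integrableOn
      integrable_stdPhi.integrableOn]
  ring

lemma antitone_FEres_left (hk : 0 < k) (hρ : ρ ^ 2 < 1) (t : ℝ) :
    Antitone fun p => FEres k ρ c₁ c₂ p t := by
  intro p p' hp
  have hmono := (strictMono_gkr hρ hk).monotone
  simp only [FEres]
  gcongr ?_ - _ - _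
  exact setIntegral_mono (integrable_gkr_mul_stdPhi k ρ p').integrableOn
    (integrable_gkr_mul_stdPhi k ρ p).integrableOn fun s =>
      mul_le_mul_of_nonneg_right (hmono (by linarith)) (stdPhi_pos s).le

variable (hk : 0 < k) (hρ₀ : 0 < ρ) (hρ : ρ ^ 2 < 1)
include hk hρ₀ hρ

lemma FEres_lt_of_gkr_eq {p t₀ : ℝ} (h : gkr k ρ (ρ * t₀ - p) = c₁) {t : ℝ} (ht : t ≠ t₀) :
    FEres k ρ c₁ c₂ p t < FEres k ρ c₁ c₂ p t₀ := by
  have hmono := strictMono_gkr hρ hk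
  have hint : ∀ a b : ℝ, IntervalIntegrable
      (fun s => gkr k ρ (ρ * s - p) * stdPhi s - c₁ * stdPhi s) volume a b := fun a b =>
    ((integrable_gkr_mul_stdPhi k ρ p).sub (integrable_stdPhi.const_mul c₁)).intervalIntegrable
  rcases ht.lt_or_gt with hlt | hgt
  · have hneg : 0 < ∫ s in t..t₀, -(gkr k ρ (ρ * s - p) * stdPhi s - c₁ * stdPhi s) := by
      refine intervalIntegral.intervalIntegral_pos_of_pos_on (hint t t₀).neg (fun s hs => ?_) hlt
      have : gkr k ρ (ρ * s - p) < c₁ := h ▸ hmono (by nlinarith [hρ₀, hs.2])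
      nlinarith [stdPhi_pos s]
    rw [intervalIntegral.integral_neg, ← FEres_sub_FEres] at hneg
    linarith
  · have hpos : 0 < ∫ s in t₀..t, gkr k ρ (ρ * s - p) * stdPhi s - c₁ * stdPhi s := by
      refine intervalIntegral.intervalIntegral_pos_of_pos_on (hint t₀ t) (fun s hs => ?_) hgt
      have : c₁ < gkr k ρ (ρ * s - p) := h ▸ hmono (by nlinarith [hρ₀, hs.1])
      nlinarith [stdPhi_pos s]
    rw [← FEres_sub_FEres] at hpos
    linarith

end FEres

section activation

variable {k ρ c₁ c₂ : ℝ} (hk : 0 < k) (hρ₀ : 0 < ρ) (hρ : ρ ^ 2 < 1)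
include hk hρ₀ hρ

lemma strictAnti_FEres_activation {x₁ : ℝ} (hx₁ : gkr k ρ x₁ = c₁) :
    StrictAnti fun t => FEres k ρ c₁ c₂ (ρ * t - x₁) t := by
  intro t t' htt'
  calc FEres k ρ c₁ c₂ (ρ * t' - x₁) t'
      ≤ FEres k ρ c₁ c₂ (ρ * t - x₁) t' :=
        antitone_FEres_left hk hρ t' (by nlinarith [hρ₀])
    _ < FEres k ρ c₁ c₂ (ρ * t - x₁) t :=
        FEres_lt_of_gkr_eq hk hρ₀ hρ (by rwa [sub_sub_cancel]) htt'.ne'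

lemma continuous_FEres_activation (x₁ : ℝ) :
    Continuous fun t => FEres k ρ c₁ c₂ (ρ * t - x₁) t := by
  have hmono := (strictMono_gkr hρ hk).monotone
  refine Continuous.sub (Continuous.sub (continuous_iff_continuousAt.2 fun t₀ => ?_)
    (by fun_prop)) continuous_const
  refine continuousAt_setIntegral_Ici_of_dominated (fun t => by fun_prop)
    ?_ (integrable_gkr_mul_stdPhi k ρ (ρ * (t₀ - 1) - x₁)) fun s => by fun_prop
  filter_upwards [Ioi_mem_nhds (sub_one_lt t₀)] with t ht s
  rw [norm_mul, norm_of_nonneg (stdPhi_pos s).le,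
    norm_of_nonneg (gkr_pos hρ hk _).le]
  exact mul_le_mul_of_nonneg_right (hmono (by nlinarith [hρ₀, mem_Ioi.1 ht]))
    (stdPhi_pos s).le

lemma tendsto_FEres_activation_atTop (x₁ : ℝ) :
    Tendsto (fun t => FEres k ρ c₁ c₂ (ρ * t - x₁) t) atTop (𝓝 (-c₂)) := by
  have hJ : Tendsto (fun t => ∫ s in Ici t, gkr k ρ (ρ * s - (ρ * t - x₁)) * stdPhi s)
      atTop (𝓝 0) := by
    refine tendsto_of_tendsto_of_tendsto_of_le_of_le' tendsto_const_nhds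
      (tendsto_integral_Ici_zero (μ := volume)
        (f := fun s => gkr k ρ (ρ * s - (-x₁)) * stdPhi s) tendsto_id) -- the `t = 0` integrand
      (.of_forall fun t => setIntegral_nonneg measurableSet_Ici fun s _ =>
        (mul_pos (gkr_pos hρ hk _) (stdPhi_pos s)).le) ?_
    filter_upwards [eventually_ge_atTop 0] with t ht
    refine setIntegral_mono (integrable_gkr_mul_stdPhi k ρ _).integrableOn
      (integrable_gkr_mul_stdPhi k ρ _).integrableOn fun s => ?_
    exact mul_le_mul_of_nonneg_right ((strictMono_gkr hρ hk).monotone (by nlinarith [hρ₀]))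
      (stdPhi_pos s).le
  have hΦ := (tendsto_stdPhiCDF_atBot.comp tendsto_neg_atTop_atBot).const_mul c₁
  simpa [FEres] using (hJ.sub hΦ).sub_const c₂

lemma tendsto_FEres_activation_atBot (hc₁ : 0 ≤ c₁) (x₁ : ℝ) :
    Tendsto (fun t => FEres k ρ c₁ c₂ (ρ * t - x₁) t) atBot atTop := by
  have hmono := (strictMono_gkr hρ hk).monotone
  have hlower : ∀ t ≤ 0,
      gkr k ρ (x₁ - ρ * t) * stdPhiCDF 0 - c₁ - c₂ ≤ FEres k ρ c₁ c₂ (ρ * t - x₁) t := by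
    intro t ht
    have hint := (integrable_gkr_mul_stdPhi k ρ (ρ * t - x₁)).integrableOn (s := Ici t)
    have hJ : gkr k ρ (x₁ - ρ * t) * stdPhiCDF 0 ≤
        ∫ s in Ici t, gkr k ρ (ρ * s - (ρ * t - x₁)) * stdPhi s :=
      calc gkr k ρ (x₁ - ρ * t) * stdPhiCDF 0
          = ∫ s in Ici 0, gkr k ρ (x₁ - ρ * t) * stdPhi s := by
            rw [integral_const_mul, ← stdPhiCDF_neg, neg_zero]
        _ ≤ ∫ s in Ici 0, gkr k ρ (ρ * s - (ρ * t - x₁)) * stdPhi s := by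
            refine setIntegral_mono_on (integrable_stdPhi.const_mul _).integrableOn
              (hint.mono_set (Ici_subset_Ici.2 ht)) measurableSet_Ici fun s hs => ?_
            exact mul_le_mul_of_nonneg_right (hmono (by nlinarith [hρ₀, mem_Ici.1 hs]))
              (stdPhi_pos s).le
        _ ≤ ∫ s in Ici t, gkr k ρ (ρ * s - (ρ * t - x₁)) * stdPhi s :=
            setIntegral_mono_set hint (ae_restrict_of_forall_mem measurableSet_Ici fun s _ =>
              (mul_pos (gkr_pos hρ hk _) (stdPhi_pos s)).le)
              (Ici_subset_Ici.2 ht).eventuallyLE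
    have hΦ : c₁ * stdPhiCDF (-t) ≤ c₁ := mul_le_of_le_one_right hc₁ (stdPhiCDF_le_one _)
    rw [FEres]
    linarith
  refine tendsto_atTop_mono' _ ((eventually_le_atBot 0).mono hlower) ?_
  refine tendsto_atTop_add_const_right _ _ <| tendsto_atTop_add_const_right _ _ <|
    Tendsto.atTop_mul_const (stdPhiCDF_pos 0) <| (tendsto_gkr_atTop hρ hk).comp ?_
  exact tendsto_atTop_add_const_left _ _ <| tendsto_neg_atBot_atTop.comp <|
    (tendsto_const_mul_atBot_of_pos hρ₀).2 tendsto_id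

end activation

theorem equilibrium_exists_unique
    (k ρ c₁ c₂ : ℝ) (hk : 0 < k) (hρ : ρ ∈ Set.Ioo (0 : ℝ) 1)
    (hc₁ : 0 < c₁) (hc₂ : 0 < c₂) :
    ∃ tstar pstar : ℝ,
      (gkr k ρ (ρ * tstar - pstar) = c₁ ∧ FEres k ρ c₁ c₂ pstar tstar = 0) ∧
      (∀ t p : ℝ,
        gkr k ρ (ρ * t - p) = c₁ → FEres k ρ c₁ c₂ p t = 0 → t = tstar ∧ p = pstar) ∧
      (∀ t : ℝ, t ≠ tstar → FEres k ρ c₁ c₂ pstar t < FEres k ρ c₁ c₂ pstar tstar) := by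
  have hρ2 : ρ ^ 2 < 1 := pow_lt_one₀ hρ.1.le hρ.2 two_ne_zero
  obtain ⟨x₁, hx₁⟩ := exists_gkr_eq hρ2 hk hc₁
  have hact : ∀ t, gkr k ρ (ρ * t - (ρ * t - x₁)) = c₁ := fun t => by rwa [sub_sub_cancel]
  obtain ⟨tstar, htstar⟩ : ∃ t, FEres k ρ c₁ c₂ (ρ * t - x₁) t = 0 := by
    obtain ⟨a, ha⟩ :=
      ((tendsto_FEres_activation_atBot hk hρ.1 hρ2 hc₁.le x₁).eventually_ge_atTop 0).exists
    obtain ⟨b, hb⟩ := ((tendsto_FEres_activation_atTop hk hρ.1 hρ2 x₁).eventually_lt_const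
      (neg_lt_zero.2 hc₂)).exists
    exact mem_range_of_exists_le_of_exists_ge (continuous_FEres_activation hk hρ.1 hρ2 x₁)
      ⟨b, hb.le⟩ ⟨a, ha⟩
  refine ⟨tstar, ρ * tstar - x₁, ⟨hact tstar, htstar⟩, fun t p hg hFE => ?_,
    fun t ht => FEres_lt_of_gkr_eq hk hρ.1 hρ2 (hact tstar) ht⟩
  have hp : p = ρ * t - x₁ := by
    linarith [(strictMono_gkr hρ2 hk).injective (hg.trans hx₁.symm)]
  have ht : t = tstar :=
    (strictAnti_FEres_activation hk hρ.1 hρ2 hx₁).injective ((hp ▸ hFE).trans htstar.symm)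
  exact ⟨ht, ht ▸ hp⟩
end

section
/- Fix k > 0, ρ ∈ (0,1), and t ∈ ℝ, and define 𝒦(p) := exp(k²/2 − k·p)·Φ_ρ(−p + k, −t + ρk) − Φ_ρ(−p, −t). Then 𝒦 is differentiable on ℝ with 𝒦′(p) = −k·exp(k²/2 − k·p)·Φ_ρ(−p + k, −t + ρk) < 0 for every p; in particular, 𝒦 is strictly decreasing in p. -/
open MeasureTheory Real Set

/-- Standard bivariate normal density with correlation `ρ`. -/
noncomputable def biPdf (ρ x y : ℝ) : ℝ :=
  (2 * Real.pi * Real.sqrt (1 - ρ ^ 2))⁻¹ *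
    Real.exp (-(x ^ 2 - 2 * ρ * x * y + y ^ 2) / (2 * (1 - ρ ^ 2)))

/-- Standard bivariate normal CDF with correlation `ρ`. -/
noncomputable def biCDF (ρ x y : ℝ) : ℝ :=
  ∫ u in Set.Iic x, ∫ v in Set.Iic y, biPdf ρ u v

/-- Free-entry expected-profit term `𝒦(p)`. -/
noncomputable def feProfit (k ρ t p : ℝ) : ℝ :=
  Real.exp (k ^ 2 / 2 - k * p) * biCDF ρ (-p + k) (-t + ρ * k) - biCDF ρ (-p) (-t)

/-!
The density factors as `f_ρ(x, v) = φ(x) · φ_{ρx, 1-ρ²}(v)` (the conditional law of the second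
coordinate), so `∂Φ_ρ/∂x (x, y) = ∫_{-∞}^y f_ρ(x, v) dv` is continuous, integrable and positive.
Completing the square gives the exponential-tilting identity
`exp (k²/2 + k x) · f_ρ(x + k, v + ρk) = f_ρ(x, v)`, so the two `x`-partials in `𝒦′` cancel and
only the derivative of the exponential factor survives; it is negative because `Φ_ρ > 0`.
-/

open ProbabilityTheory

section PrimitiveIic

variable {f : ℝ → ℝ}

lemma setIntegral_Iic_eq_add_intervalIntegral (hf : Integrable f) (a z : ℝ) :
    ∫ w in Iic z, f w = (∫ w in Iic a, f w) + ∫ w in a..z, f w := by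
  rw [← intervalIntegral.integral_Iic_sub_Iic hf.integrableOn hf.integrableOn]
  ring

lemma continuous_setIntegral_Iic (hf : Integrable f) : Continuous fun z => ∫ w in Iic z, f w := by
  rw [funext (setIntegral_Iic_eq_add_intervalIntegral hf 0)]
  exact continuous_const.add
    (intervalIntegral.continuous_primitive (fun _ _ => hf.intervalIntegrable) 0)

lemma hasDerivAt_setIntegral_Iic (hf : Integrable f) {x : ℝ} (hx : ContinuousAt f x) :
    HasDerivAt (fun z => ∫ w in Iic z, f w) (f x) x := by
  rw [funext (setIntegral_Iic_eq_add_intervalIntegral hf 0)]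
  exact (intervalIntegral.integral_hasDerivAt_right hf.intervalIntegrable
    hf.aestronglyMeasurable.stronglyMeasurableAtFilter hx).const_add _

lemma setIntegral_Iic_pos (hf : Integrable f) (hpos : ∀ x, 0 < f x) (z : ℝ) :
    0 < ∫ w in Iic z, f w := by
  rw [setIntegral_pos_iff_support_of_nonneg_ae (ae_of_all _ fun x => (hpos x).le) hf.integrableOn,
    Function.support_eq_univ fun x => (hpos x).ne', univ_inter, Real.volume_Iic]
  exact ENNReal.zero_lt_top

lemma setIntegral_Iic_comp_add_right (f : ℝ → ℝ) (a z : ℝ) :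
    ∫ v in Iic z, f (v + a) = ∫ w in Iic (z + a), f w := by
  rw [← (measurePreserving_add_right volume a).setIntegral_preimage_emb
    (MeasurableEquiv.addRight a).measurableEmbedding f (Iic (z + a))]
  congr 1
  ext v
  simp

end PrimitiveIic

lemma exp_mul_biPdf_add (ρ k x w : ℝ) :
    exp (k ^ 2 / 2 + k * x) * biPdf ρ (x + k) (w + ρ * k) = biPdf ρ x w := by
  by_cases hρ : 1 - ρ ^ 2 = 0
  · simp [biPdf, hρ]
  unfold biPdf
  rw [mul_left_comm, ← exp_add]
  congr 2
  field_simp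
  ring

noncomputable def biPdfIntegralIic (ρ x y : ℝ) : ℝ := ∫ v in Iic y, biPdf ρ x v

lemma exp_mul_biPdfIntegralIic_add (ρ k x y : ℝ) :
    exp (k ^ 2 / 2 + k * x) * biPdfIntegralIic ρ (x + k) (y + ρ * k) = biPdfIntegralIic ρ x y := by
  rw [biPdfIntegralIic, ← setIntegral_Iic_comp_add_right, ← integral_const_mul]
  simp_rw [exp_mul_biPdf_add]
  rfl

section Correlation

variable {ρ : ℝ} (hρ : |ρ| < 1)
include hρ

lemma biPdf_eq_gaussianPDFReal_mul (x v : ℝ) :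
    biPdf ρ x v = gaussianPDFReal 0 1 x * gaussianPDFReal (ρ * x) (1 - ρ ^ 2).toNNReal v := by
  have hvar : 0 < 1 - ρ ^ 2 := sub_pos.2 ((sq_lt_one_iff_abs_lt_one ρ).2 hρ)
  rw [biPdf, gaussianPDFReal, gaussianPDFReal, Real.coe_toNNReal _ hvar.le, NNReal.coe_one,
    mul_one, mul_mul_mul_comm, ← mul_inv, ← exp_add, ← Real.sqrt_mul (by positivity),
    show 2 * π * (2 * π * (1 - ρ ^ 2)) = (2 * π) ^ 2 * (1 - ρ ^ 2) by ring,
    Real.sqrt_mul (by positivity), Real.sqrt_sq (by positivity)]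
  congr 2
  field_simp
  ring

lemma biPdfIntegralIic_eq (x y : ℝ) :
    biPdfIntegralIic ρ x y =
      gaussianPDFReal 0 1 x * ∫ w in Iic (y - ρ * x), gaussianPDFReal 0 (1 - ρ ^ 2).toNNReal w := by
  simp_rw [biPdfIntegralIic, biPdf_eq_gaussianPDFReal_mul hρ x, integral_const_mul, sub_eq_add_neg,
    ← setIntegral_Iic_comp_add_right, gaussianPDFReal_add, sub_neg_eq_add, zero_add]

lemma continuous_biPdfIntegralIic (y : ℝ) : Continuous fun x => biPdfIntegralIic ρ x y := by
  simp_rw [biPdfIntegralIic_eq hρ]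
  exact (by unfold gaussianPDFReal; fun_prop : Continuous (gaussianPDFReal 0 1)).mul
    ((continuous_setIntegral_Iic (integrable_gaussianPDFReal _ _)).comp (by fun_prop))

lemma integrable_biPdfIntegralIic (y : ℝ) : Integrable fun x => biPdfIntegralIic ρ x y := by
  simp_rw [biPdfIntegralIic_eq hρ]
  set g := gaussianPDFReal 0 (1 - ρ ^ 2).toNNReal
  have hg : Integrable g := integrable_gaussianPDFReal _ _
  have hg_nonneg : ∀ w, 0 ≤ g w := gaussianPDFReal_nonneg _ _
  refine (integrable_gaussianPDFReal 0 1).mul_bdd (c := ∫ w, g w)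
    ((continuous_setIntegral_Iic hg).comp (by fun_prop)).aestronglyMeasurable
    (ae_of_all _ fun x => ?_)
  rw [Real.norm_of_nonneg (setIntegral_nonneg measurableSet_Iic fun w _ => hg_nonneg w)]
  exact setIntegral_le_integral hg (ae_of_all _ hg_nonneg)

lemma biPdfIntegralIic_pos (x y : ℝ) : 0 < biPdfIntegralIic ρ x y := by
  have hvar : (1 - ρ ^ 2).toNNReal ≠ 0 := by
    simpa using (sq_lt_one_iff_abs_lt_one ρ).2 hρ
  rw [biPdfIntegralIic_eq hρ]
  exact mul_pos (gaussianPDFReal_pos _ _ _ one_ne_zero)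
    (setIntegral_Iic_pos (integrable_gaussianPDFReal _ _) (gaussianPDFReal_pos _ _ · hvar) _)

lemma hasDerivAt_biCDF_fst (x y : ℝ) :
    HasDerivAt (fun z => biCDF ρ z y) (biPdfIntegralIic ρ x y) x :=
  hasDerivAt_setIntegral_Iic (integrable_biPdfIntegralIic hρ y)
    (continuous_biPdfIntegralIic hρ y).continuousAt

lemma biCDF_pos (x y : ℝ) : 0 < biCDF ρ x y :=
  setIntegral_Iic_pos (integrable_biPdfIntegralIic hρ y) (biPdfIntegralIic_pos hρ · y) x

lemma hasDerivAt_feProfit (k t p : ℝ) :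
    HasDerivAt (feProfit k ρ t)
      (-(k * exp (k ^ 2 / 2 - k * p) * biCDF ρ (-p + k) (-t + ρ * k))) p := by
  have hexp : HasDerivAt (fun p => exp (k ^ 2 / 2 - k * p)) (exp (k ^ 2 / 2 - k * p) * -k) p := by
    simpa using (((hasDerivAt_id p).const_mul k).const_sub (k ^ 2 / 2)).exp
  have hB := (hasDerivAt_biCDF_fst hρ (-p + k) (-t + ρ * k)).comp p
    ((hasDerivAt_neg p).add_const k)
  have hC := (hasDerivAt_biCDF_fst hρ (-p) (-t)).comp p (hasDerivAt_neg p)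
  rw [Function.comp_def] at hB hC
  refine ((hexp.mul hB).sub hC).congr_deriv ?_
  have htilt := exp_mul_biPdfIntegralIic_add ρ k (-p) (-t)
  rw [mul_neg, ← sub_eq_add_neg] at htilt
  linear_combination -htilt

end Correlation

theorem feProfit_deriv_neg_strictAnti
    (k ρ t : ℝ) (hk : 0 < k) (hρ : ρ ∈ Set.Ioo (0 : ℝ) 1) :
    (∀ p : ℝ,
      HasDerivAt (feProfit k ρ t)
        (-(k * Real.exp (k ^ 2 / 2 - k * p) * biCDF ρ (-p + k) (-t + ρ * k))) p ∧
      -(k * Real.exp (k ^ 2 / 2 - k * p) * biCDF ρ (-p + k) (-t + ρ * k)) < 0) ∧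
    StrictAnti (feProfit k ρ t) := by
  have hρ' : |ρ| < 1 := abs_lt.2 ⟨by linarith [hρ.1], hρ.2⟩
  have hderiv := hasDerivAt_feProfit hρ' k t
  have hneg : ∀ p : ℝ, -(k * exp (k ^ 2 / 2 - k * p) * biCDF ρ (-p + k) (-t + ρ * k)) < 0 :=
    fun p => neg_neg_of_pos (mul_pos (mul_pos hk (exp_pos _)) (biCDF_pos hρ' _ _))
  exact ⟨fun p => ⟨hderiv p, hneg p⟩, strictAnti_of_hasDerivAt_neg hderiv hneg⟩
end
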